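/- In G = F₂ × ℤ², for any vectors b, c ∈ ℤ², let H1 = ⟨(x³, (3,3)), (yx, b), (y³xy⁻², c), (1, (1,1))⟩ and H2 = ⟨(x², (2,2)), (y x y⁻¹, (0,0))⟩. Then H1 ∩ H2 = ⟨(x⁶, (6,6)), (y x³ y⁻¹, (0,0))⟩. -/

import Mathlib

namespace ParamExampleCase4

abbrev F₂ := FreeGroup (Fin 2)
abbrev A := Multiplicative (ℤ × ℤ)

def x : F₂ := FreeGroup.of 0
def y : F₂ := FreeGroup.of 1

/-- The vector `a ∈ ℤ²` viewed multiplicatively. -/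
def v (a : ℤ × ℤ) : A := Multiplicative.ofAdd a

/-!
`H2` is the image of the homomorphism `Ψ : F₂ → G`, `x ↦ (x², (2,2))`,
`y ↦ (yxy⁻¹, 0)`, which maps `L = ⟨x³, y³⟩` onto the right-hand side, and the first projection
of `H1` lies in `K1 = ⟨x³, yx, y³xy⁻²⟩`. So it suffices that `ψ w ∈ K1` forces `w ∈ L`, where
`ψ` is the first component of `Ψ`. To see this, let `F₂` act on the completion of the Stallings
graph of `K1` (the graph with trees attached wherever an edge is missing), in which `K1` fixes
the base vertex, and label its points by cosets of `L` so that acting by `ψ w` multiplies the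
label by `w`. If `ψ w` fixes the base vertex, whose label is `L`, then `w L = L`.
-/

namespace PartialAction

variable {D V : Type*} [DecidableEq D] [InvolutiveInv D]

/-- `(v, w)` stands for the point reached from the vertex `v` along the reduced word `w`, read
from its last letter to its head, whose first step already leaves the graph `f`. -/
def IsAdmissible (f : D → V → Option V) (s : V × List D) : Prop :=
  s.2.IsChain (fun a b => a ≠ b⁻¹) ∧ ∀ d ∈ s.2.getLast?, f d s.1 = none

abbrev Completion (f : D → V → Option V) : Type _ := {s : V × List D // IsAdmissible f s}

def step (f : D → V → Option V) (d : D) : V × List D → V × List D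
  | (v, []) =>
    match f d v with
    | some w => (w, [])
    | none => (v, [d])
  | (v, e :: t) => if e = d⁻¹ then (v, t) else (v, d :: e :: t)

variable {f : D → V → Option V}

@[simp]
lemma step_nil (d : D) (v : V) : step f d (v, []) = (f d v).elim (v, [d]) (·, []) := by
  cases h : f d v <;> simp [step, h]

@[simp]
lemma step_cons (d e : D) (v : V) (t : List D) :
    step f d (v, e :: t) = if e = d⁻¹ then (v, t) else (v, d :: e :: t) := rfl

lemma IsAdmissible.step {s : V × List D} (hs : IsAdmissible f s) (d : D) :
    IsAdmissible f (step f d s) := by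
  obtain ⟨v, _ | ⟨e, t⟩⟩ := s
  · cases hv : f d v <;> simp_all [IsAdmissible]
  · by_cases he : e = d⁻¹
    · simp only [step_cons, if_pos he]
      refine ⟨hs.1.tail, fun r hr => hs.2 r ?_⟩
      cases t <;> simp_all
    · simp only [step_cons, if_neg he]
      refine ⟨List.isChain_cons_cons.2 ⟨?_, hs.1⟩, fun r hr => hs.2 r ?_⟩
      · rwa [ne_eq, ← inv_eq_iff_eq_inv, eq_comm]
      · simpa [List.getLast?_cons_cons] using hr

lemma step_inv_step (hf : ∀ d a b, f d a = some b ↔ f d⁻¹ b = some a) {s : V × List D}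
    (hs : IsAdmissible f s) (d : D) : step f d⁻¹ (step f d s) = s := by
  obtain ⟨v, _ | ⟨e, t⟩⟩ := s
  · cases hv : f d v with
    | some w => simp [hv, (hf d v w).1 hv]
    | none => simp [hv]
  · by_cases he : e = d⁻¹
    · subst he
      cases t with
      | nil => simp [hs.2 d⁻¹ (by simp)]
      | cons a u =>
        have had : a ≠ d := by simpa [eq_comm] using (List.isChain_cons_cons.1 hs.1).1
        simp [had]
    · simp [he]

def Completion.perm (hf : ∀ d a b, f d a = some b ↔ f d⁻¹ b = some a) (d : D) :
    Equiv.Perm (Completion f) where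
  toFun s := ⟨step f d s.1, s.2.step d⟩
  invFun s := ⟨step f d⁻¹ s.1, s.2.step d⁻¹⟩
  left_inv s := Subtype.ext (step_inv_step hf s.2 d)
  right_inv s := Subtype.ext (by simpa using step_inv_step hf s.2 d⁻¹)

@[simp]
lemma Completion.coe_perm (hf : ∀ d a b, f d a = some b ↔ f d⁻¹ b = some a) (d : D)
    (s : Completion f) : (perm hf d s).1 = step f d s.1 := rfl

@[simp]
lemma Completion.coe_perm_symm (hf : ∀ d a b, f d a = some b ↔ f d⁻¹ b = some a) (d : D)
    (s : Completion f) : ((perm hf d).symm s).1 = step f d⁻¹ s.1 := rfl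

end PartialAction

lemma map_perm_apply_eq_smul {ι X Y : Type*} [MulAction (FreeGroup ι) Y]
    (ρ : FreeGroup ι →* Equiv.Perm X) (φ : X → Y)
    (h : ∀ i s, φ (ρ (FreeGroup.of i) s) = FreeGroup.of i • φ s) (w : FreeGroup ι) (s : X) :
    φ (ρ w s) = w • φ s := by
  induction w using FreeGroup.induction_on generalizing s with
  | C1 => simp
  | of i => exact h i s
  | inv_of i _ =>
    rw [map_inv, eq_inv_smul_iff, ← h]
    simp
  | mul u w hu hw => rw [map_mul, Equiv.Perm.mul_apply, hu, hw, mul_smul]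

def Ψ : F₂ →* F₂ × A := FreeGroup.lift ![(x ^ 2, v (2, 2)), (y * x * y⁻¹, v (0, 0))]

def ψ : F₂ →* F₂ := (MonoidHom.fst F₂ A).comp Ψ

def K1 : Subgroup F₂ := Subgroup.closure {x ^ 3, y * x, y ^ 3 * x * (y ^ 2)⁻¹}

def L : Subgroup F₂ := Subgroup.closure {x ^ 3, y ^ 3}

lemma x_mul_x_mul_x_mem_L : x * (x * x) ∈ L := by
  rw [← pow_three]
  exact Subgroup.subset_closure (by simp)

lemma y_mul_y_mul_y_mem_L : y * (y * y) ∈ L := by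
  rw [← pow_three]
  exact Subgroup.subset_closure (by simp)

inductive Letter | xp | xm | yp | ym
  deriving DecidableEq

instance : InvolutiveInv Letter where
  inv
    | .xp => .xm
    | .xm => .xp
    | .yp => .ym
    | .ym => .yp
  inv_inv d := by cases d <;> rfl

@[simp] lemma Letter.inv_xp : Letter.xp⁻¹ = .xm := rfl
@[simp] lemma Letter.inv_xm : Letter.xm⁻¹ = .xp := rfl
@[simp] lemma Letter.inv_yp : Letter.yp⁻¹ = .ym := rfl
@[simp] lemma Letter.inv_ym : Letter.ym⁻¹ = .yp := rfl

inductive Vertex | v0 | v1 | v2 | v3 | v4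
  deriving DecidableEq

open Letter Vertex PartialAction

/-- The Stallings graph of `K1` based at `v0`: the word `y ^ 3 * x * (y ^ 2)⁻¹`, read from
right to left, is the loop `v0 → v1 → v3 → v4 → v3 → v1 → v0`. -/
def edge : Letter → Vertex → Option Vertex
  | xp, v0 => some v1 | xp, v1 => some v2 | xp, v2 => some v0 | xp, v3 => some v4
  | xm, v1 => some v0 | xm, v2 => some v1 | xm, v0 => some v2 | xm, v4 => some v3
  | yp, v1 => some v0 | yp, v3 => some v1 | yp, v4 => some v3
  | ym, v0 => some v1 | ym, v1 => some v3 | ym, v3 => some v4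
  | _, _ => none

lemma edge_eq_some_iff (d : Letter) (a b : Vertex) :
    edge d a = some b ↔ edge d⁻¹ b = some a := by
  cases d <;> cases a <;> cases b <;> decide

abbrev Covering := Completion edge

def act : F₂ →* Equiv.Perm Covering :=
  FreeGroup.lift ![Completion.perm edge_eq_some_iff xp, Completion.perm edge_eq_some_iff yp]

def basepoint : Covering := ⟨(v0, []), by simp [IsAdmissible]⟩

lemma K1_le_comap_stabilizer :
    K1 ≤ (MulAction.stabilizer (Equiv.Perm Covering) basepoint).comap act := by
  rw [K1, Subgroup.closure_le]
  rintro g (rfl | rfl | rfl) <;>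
    simp [act, x, y, basepoint, Subtype.ext_iff, pow_succ, Equiv.Perm.inv_def, edge]

def vertexLabel : Vertex → F₂
  | v0 => 1 | v1 => x⁻¹ | v2 => x | v3 => y * x⁻¹ | v4 => x * y * x⁻¹

/- The recursive arms peel off a prefix `ψ x ^ (±1) = x ^ (±2)` or `ψ y ^ (±1) = y x^(±1) y⁻¹`,
or rewrite `y x^(±1)` as `ψ y ^ (±1) * y`, recording `x ^ (±1)` or `y ^ (±1)`; the remaining
arms fix the labels of representatives of the other `ψ F₂`-orbits. -/
def label (c : Vertex) : List Letter → F₂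
  | [xm] => y * x⁻¹
  | [yp] => if c = v0 then y⁻¹ else y
  | [yp, xp] => y * y * x⁻¹
  | [yp, xm] => y⁻¹ * x⁻¹
  | xp :: xp :: t => x * label c t
  | xm :: xm :: t => x⁻¹ * label c t
  | yp :: xp :: ym :: t => y * label c t
  | yp :: xm :: ym :: t => y⁻¹ * label c t
  | xp :: t@(_ :: _) => label c t
  | xm :: t@(_ :: _) => x⁻¹ * label c t
  | yp :: xp :: t => y * label c (yp :: t)
  | yp :: xm :: t => y⁻¹ * label c (yp :: t)
  | yp :: t => y * label c t
  | ym :: t => label c t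
  | _ => vertexLabel c
  termination_by w => w.length

def cosetLabel (s : Vertex × List Letter) : F₂ ⧸ L := label s.1 s.2

lemma cosetLabel_step_xp_step_xp {c : Vertex} {w : List Letter}
    (hs : IsAdmissible edge (c, w)) :
    cosetLabel (step edge xp (step edge xp (c, w))) = x • cosetLabel (c, w) := by
  rcases w with _ | ⟨d, _ | ⟨e, t⟩⟩ <;> cases c <;> (try cases d) <;> (try cases e) <;>
    (try simp [IsAdmissible, edge] at hs) <;>
    simp [cosetLabel, edge, label, vertexLabel, QuotientGroup.eq, mul_assoc, x_mul_x_mul_x_mem_L]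

lemma cosetLabel_step_yp_step_xp_step_ym {c : Vertex} {w : List Letter}
    (hs : IsAdmissible edge (c, w)) :
    cosetLabel (step edge yp (step edge xp (step edge ym (c, w)))) = y • cosetLabel (c, w) := by
  rcases w with _ | ⟨d, _ | ⟨e, _ | ⟨d', t⟩⟩⟩ <;> cases c <;> (try cases d) <;> (try cases e) <;>
    (try cases d') <;> (try simp [IsAdmissible, edge] at hs) <;>
    simp [cosetLabel, edge, label, vertexLabel, QuotientGroup.eq, mul_assoc, y_mul_y_mul_y_mem_L]

lemma cosetLabel_act_ψ (w : F₂) (s : Covering) :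
    cosetLabel (act (ψ w) s).1 = w • cosetLabel s.1 := by
  refine map_perm_apply_eq_smul (act.comp ψ) (fun s ↦ cosetLabel s.1) (fun i s ↦ ?_) w s
  fin_cases i
  · simpa [ψ, Ψ, act, x, pow_two] using cosetLabel_step_xp_step_xp s.2
  · simpa [ψ, Ψ, act, x, y, Equiv.Perm.inv_def] using cosetLabel_step_yp_step_xp_step_ym s.2

lemma mem_L_of_ψ_mem_K1 {w : F₂} (hw : ψ w ∈ K1) : w ∈ L := by
  have hfix : act (ψ w) basepoint = basepoint := K1_le_comap_stabilizer hw
  have h := cosetLabel_act_ψ w basepoint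
  rw [hfix] at h
  simpa [cosetLabel, basepoint, label, vertexLabel, QuotientGroup.eq] using h

lemma range_Ψ : Ψ.range = Subgroup.closure {(x ^ 2, v (2, 2)), (y * x * y⁻¹, v (0, 0))} := by
  rw [Ψ, FreeGroup.range_lift_eq_closure, Matrix.range_cons_cons_empty]

lemma map_Ψ_L : L.map Ψ = Subgroup.closure {(x ^ 6, v (6, 6)), (y * x ^ 3 * y⁻¹, v (0, 0))} := by
  rw [L, MonoidHom.map_closure, Set.image_pair]
  congr 3
  simp [Ψ, y, conj_pow, v, ← ofAdd_nsmul]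

abbrev H1 (b c : ℤ × ℤ) : Subgroup (F₂ × A) :=
  Subgroup.closure {(x ^ 3, v (3, 3)), (y * x, v b), (y ^ 3 * x * (y ^ 2)⁻¹, v c), (1, v (1, 1))}

lemma H1_le_comap_fst_K1 (b c : ℤ × ℤ) : H1 b c ≤ K1.comap (MonoidHom.fst F₂ A) := by
  rw [Subgroup.closure_le]
  rintro _ (rfl | rfl | rfl | rfl) <;> simp [K1, Subgroup.mem_closure_of_mem]

lemma map_Ψ_L_le_H1 (b c : ℤ × ℤ) : L.map Ψ ≤ H1 b c := by
  have h₁ : ((x ^ 3, v (3, 3)) : F₂ × A) ∈ H1 b c := Subgroup.subset_closure (by simp)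
  have h₂ : ((y * x, v b) : F₂ × A) ∈ H1 b c := Subgroup.subset_closure (by simp)
  have h₄ : ((1, v (1, 1)) : F₂ × A) ∈ H1 b c := Subgroup.subset_closure (by simp)
  rw [map_Ψ_L, Subgroup.closure_le]
  rintro _ (rfl | rfl) <;> rw [SetLike.mem_coe]
  · convert pow_mem h₁ 2 using 1
    simp [← pow_mul, v, ← ofAdd_nsmul]
  · convert mul_mem (mul_mem (mul_mem h₂ h₁) (inv_mem h₂)) (pow_mem (inv_mem h₄) 3) using 1
    refine Prod.ext ?_ ?_
    · simp only [Prod.fst_mul, Prod.fst_inv, Prod.pow_fst]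
      group
    · simp only [Prod.snd_mul, Prod.snd_inv, Prod.pow_snd, v, ← ofAdd_add, ← ofAdd_neg,
        ← ofAdd_nsmul]
      congr 1
      ext <;> simp

/-- In `G = F₂ × ℤ²`, for any `b, c ∈ ℤ²`, with
`H1 = ⟨(x³,(3,3)), (yx,b), (y³xy⁻²,c), (1,(1,1))⟩` and
`H2 = ⟨(x²,(2,2)), (yxy⁻¹,(0,0))⟩`, one has
`H1 ∩ H2 = ⟨(x⁶,(6,6)), (yx³y⁻¹,(0,0))⟩`. -/
theorem case4_intersection (b c : ℤ × ℤ) :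
    (Subgroup.closure {(x ^ 3, v (3, 3)), (y * x, v b),
        (y ^ 3 * x * (y ^ 2)⁻¹, v c), (1, v (1, 1))} ⊓
      Subgroup.closure {(x ^ 2, v (2, 2)), (y * x * y⁻¹, v (0, 0))} :
      Subgroup (F₂ × A)) =
    Subgroup.closure {(x ^ 6, v (6, 6)), (y * x ^ 3 * y⁻¹, v (0, 0))} := by
  rw [← range_Ψ, ← map_Ψ_L]
  refine le_antisymm ?_ (le_inf (map_Ψ_L_le_H1 b c) (Subgroup.map_le_range _ _))
  rintro _ ⟨hH1, w, rfl⟩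
  exact ⟨w, mem_L_of_ψ_mem_K1 (H1_le_comap_fst_K1 b c hH1), rfl⟩

end ParamExampleCase4
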